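/- arXiv:0904.3921 — 6 statements merged into one kernel-verified Lean document; each statement's English description precedes it below -/
import Mathlib

section
/- Gödel's first ontological lemma: under the positivity axioms—(A1) for every property φ, P(¬φ) ↔ ¬P(φ), and (A2) if P(φ) and necessarily every x satisfying φ satisfies ψ, then P(ψ)—every positive property is possibly instantiated: P(φ) → ◇∃x φ(x). -/
def Box {W : Type} (R : W → W → Prop) (p : W → Prop) (w : W) : Prop := ∀ v, R w v → p v
def Dia {W : Type} (R : W → W → Prop) (p : W → Prop) (w : W) : Prop := ∃ v, R w v ∧ p v

/-- God-like: possessing all positive properties. -/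
def Glike {W I : Type} (P : (I → W → Prop) → W → Prop) (x : I) (w : W) : Prop :=
  ∀ φ : I → W → Prop, P φ w → φ x w

/-- φ is an essence of x at w. -/
def Ess {W I : Type} (R : W → W → Prop) (φ : I → W → Prop) (x : I) (w : W) : Prop :=
  φ x w ∧ ∀ ψ : I → W → Prop, ψ x w → Box R (fun v => ∀ y, φ y v → ψ y v) w

/-- Necessary existence. -/
def NecEx {W I : Type} (R : W → W → Prop) (P : (I → W → Prop) → W → Prop) (x : I) (w : W) : Prop :=
  ∀ φ : I → W → Prop, Ess R φ x w → Box R (fun v => ∃ y, φ y v) w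

theorem possibly_instantiated {W I : Type} (R : W → W → Prop) (hR : Equivalence R)
    (P : (I → W → Prop) → W → Prop)
    (A1 : ∀ (w : W) (φ : I → W → Prop), P (fun x v => ¬ φ x v) w ↔ ¬ P φ w)
    (A2 : ∀ (w : W) (φ ψ : I → W → Prop),
      P φ w → Box R (fun v => ∀ x, φ x v → ψ x v) w → P ψ w) :
    ∀ (w : W) (φ : I → W → Prop), P φ w → Dia R (fun v => ∃ x, φ x v) w := by
  intro w φ hP
  by_contra h
  have hbox : Box R (fun v => ∀ x, φ x v → ¬ φ x v) w := by
    intro v hv x hx hx'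
    exact h ⟨v, hv, x, hx⟩
  exact (A1 w φ).mp (A2 w φ _ hP hbox) hP
end

section
/- Under Gödel's axioms A1–A2 together with the axiom P(G) (Godlikeness is positive), it is possible that a God-like being exists: ◇∃x G(x). -/
theorem possibly_god {W I : Type} (R : W → W → Prop) (hR : Equivalence R)
    (P : (I → W → Prop) → W → Prop)
    (A1 : ∀ (w : W) (φ : I → W → Prop), P (fun x v => ¬ φ x v) w ↔ ¬ P φ w)
    (A2 : ∀ (w : W) (φ ψ : I → W → Prop),
      P φ w → Box R (fun v => ∀ x, φ x v → ψ x v) w → P ψ w)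
    (A3 : ∀ w : W, P (Glike P) w) :
    ∀ w : W, Dia R (fun v => ∃ x, Glike P x v) w := by
  intro w
  by_contra h
  have box : Box R (fun v => ∀ x, Glike P x v → ¬ Glike P x v) w := by
    intro v hv x hx _
    exact h ⟨v, hv, x, hx⟩
  have hneg : P (fun x v => ¬ Glike P x v) w := A2 w (Glike P) _ (A3 w) box
  exact (A1 w (Glike P)).mp hneg (A3 w)
end

section
/- Gödel's essence theorem: under axioms A1, A2, and A4 (P(φ) → □P(φ)), if G(x) holds at a world then G is the essence of x at that world, i.e., G(x) holds and for every property ψ with ψ(x), necessarily every God-like being satisfies ψ. -/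
theorem god_essence {W I : Type} (R : W → W → Prop) (hR : Equivalence R)
    (P : (I → W → Prop) → W → Prop)
    (A1 : ∀ (w : W) (φ : I → W → Prop), P (fun x v => ¬ φ x v) w ↔ ¬ P φ w)
    (A2 : ∀ (w : W) (φ ψ : I → W → Prop),
      P φ w → Box R (fun v => ∀ x, φ x v → ψ x v) w → P ψ w)
    (A4 : ∀ (w : W) (φ : I → W → Prop), P φ w → Box R (fun v => P φ v) w) :
    ∀ (w : W) (x : I), Glike P x w → Ess R (Glike P) x w := by
  intro w x hG
  refine ⟨hG, fun ψ hpsi v hwv y hGy => ?_⟩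
  have hPψ : P ψ w := by
    by_contra h
    exact (hG _ ((A1 w ψ).mpr h)) hpsi
  exact hGy ψ (A4 w ψ hPψ v hwv)
end

section
/- Gödel's ontological theorem: under axioms A1–A5 in S5, necessarily there exists a God-like being: □∃x G(x). -/
theorem godel_ontological {W I : Type} (R : W → W → Prop) (hR : Equivalence R)
    (P : (I → W → Prop) → W → Prop)
    (A1 : ∀ (w : W) (φ : I → W → Prop), P (fun x v => ¬ φ x v) w ↔ ¬ P φ w)
    (A2 : ∀ (w : W) (φ ψ : I → W → Prop),
      P φ w → Box R (fun v => ∀ x, φ x v → ψ x v) w → P ψ w)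
    (A3 : ∀ w : W, P (Glike P) w)
    (A4 : ∀ (w : W) (φ : I → W → Prop), P φ w → Box R (fun v => P φ v) w)
    (A5 : ∀ w : W, P (NecEx R P) w) :
    ∀ w : W, Box R (fun v => ∃ x, Glike P x v) w := by
  -- positivity implies possible exemplification
  have pos_dia : ∀ (w : W) (φ : I → W → Prop), P φ w → Dia R (fun v => ∃ x, φ x v) w := by
    intro w φ hφ
    by_contra h
    have hbox : Box R (fun v => ∀ x, φ x v → (fun x v => ¬ φ x v) x v) w := by
      intro v hv x hx hx'
      exact h ⟨v, hv, x, hx⟩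
    have := A2 w φ (fun x v => ¬ φ x v) hφ hbox
    exact (A1 w φ).mp this hφ
  -- a god-like being has every property positively
  have god_pos : ∀ (v : W) (x : I), Glike P x v → ∀ ψ : I → W → Prop, ψ x v → P ψ v := by
    intro v x hg ψ hψ
    by_contra hP
    exact hg (fun x v => ¬ ψ x v) ((A1 v ψ).mpr hP) hψ
  -- Glike is an essence of any god-like being
  have god_ess : ∀ (v : W) (x : I), Glike P x v → Ess R (Glike P) x v := by
    intro v x hg
    refine ⟨hg, fun ψ hψ u hu y hy => ?_⟩
    exact hy ψ (A4 v ψ (god_pos v x hg ψ hψ) u hu)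
  intro w
  obtain ⟨v, hwv, x, hx⟩ := pos_dia w (Glike P) (A3 w)
  have hNE : NecEx R P x v := hx (NecEx R P) (A5 v)
  have hbox : Box R (fun u => ∃ y, Glike P y u) v := hNE (Glike P) (god_ess v x hx)
  intro u hwu
  exact hbox u (hR.trans (hR.symm hwv) hwu)
end

section
/- Lemma: under Gödel's axioms A1–A5 in S5, if a God-like being exists at some world then necessarily a God-like being exists: ∃x G(x) → □∃x G(x). -/
theorem exists_implies_nec_exists {W I : Type} (R : W → W → Prop) (hR : Equivalence R)
    (P : (I → W → Prop) → W → Prop)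
    (A1 : ∀ (w : W) (φ : I → W → Prop), P (fun x v => ¬ φ x v) w ↔ ¬ P φ w)
    (A2 : ∀ (w : W) (φ ψ : I → W → Prop),
      P φ w → Box R (fun v => ∀ x, φ x v → ψ x v) w → P ψ w)
    (A3 : ∀ w : W, P (Glike P) w)
    (A4 : ∀ (w : W) (φ : I → W → Prop), P φ w → Box R (fun v => P φ v) w)
    (A5 : ∀ w : W, P (NecEx R P) w) :
    ∀ w : W, (∃ x, Glike P x w) → Box R (fun v => ∃ x, Glike P x v) w := by
  intro w ⟨x, hG⟩
  -- G implies every property x has is positive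
  have hpos : ∀ ψ : I → W → Prop, ψ x w → P ψ w := by
    intro ψ hψ
    by_contra hnP
    exact hG (fun y v => ¬ ψ y v) ((A1 w ψ).mpr hnP) hψ
  -- Glike P is an essence of x at w
  have hess : Ess R (Glike P) x w := by
    refine ⟨hG, fun ψ hψ v hv y hGy => hGy ψ (A4 w ψ (hpos ψ hψ) v hv)⟩
  exact hG (NecEx R P) (A5 w) (Glike P) hess
end

section
/- Sobel's modal collapse: in Gödel's ontological system O (S5 plus A1–A5), for every proposition φ, φ → □φ is derivable; equivalently ◇φ → □φ. -/
theorem modal_collapse {W I : Type} (R : W → W → Prop) (hR : Equivalence R)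
    (P : (I → W → Prop) → W → Prop)
    (A1 : ∀ (w : W) (φ : I → W → Prop), P (fun x v => ¬ φ x v) w ↔ ¬ P φ w)
    (A2 : ∀ (w : W) (φ ψ : I → W → Prop),
      P φ w → Box R (fun v => ∀ x, φ x v → ψ x v) w → P ψ w)
    (A3 : ∀ w : W, P (Glike P) w)
    (A4 : ∀ (w : W) (φ : I → W → Prop), P φ w → Box R (fun v => P φ v) w)
    (A5 : ∀ w : W, P (NecEx R P) w) :
    ∀ (φ : W → Prop) (w : W), (φ w → Box R φ w) ∧ (Dia R φ w → Box R φ w) := by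
  -- Preliminary facts
  have pos_inst : ∀ (w : W) (φ : I → W → Prop), P φ w → ∃ v, R w v ∧ ∃ x, φ x v := by
    intro w φ hP
    by_contra h
    push_neg at h
    have hbox : Box R (fun v => ∀ x, φ x v → ¬ φ x v) w := by
      intro v hv x hx
      exact fun _ => h v hv x hx
    have := A2 w φ (fun x v => ¬ φ x v) hP hbox
    exact (A1 w φ).mp this hP
  have god_pos : ∀ (w : W) (g : I), Glike P g w → ∀ ψ : I → W → Prop, ψ g w → P ψ w := by
    intro w g hg ψ hψ
    by_contra h
    exact hg (fun x v => ¬ ψ x v) ((A1 w ψ).mpr h) hψ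
  have god_ess : ∀ (w : W) (g : I), Glike P g w → Ess R (Glike P) g w := by
    intro w g hg
    refine ⟨hg, ?_⟩
    intro ψ hψ v hv y hy
    exact hy ψ (A4 w ψ (god_pos w g hg ψ hψ) v hv)
  have god_every : ∀ (w : W) (g : I), Glike P g w → ∀ v, R w v → ∃ y, Glike P y v := by
    intro w g hg v hv
    have hne : NecEx R P g w := hg (NecEx R P) (A5 w)
    exact hne (Glike P) (god_ess w g hg) v hv
  have god_all : ∀ w : W, ∃ g, Glike P g w := by
    intro w
    obtain ⟨v, hv, g, hg⟩ := pos_inst w (Glike P) (A3 w)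
    exact god_every v g hg w (hR.symm hv)
  have main : ∀ (φ : W → Prop) (w : W), φ w → Box R φ w := by
    intro φ w hφ v hv
    obtain ⟨g, hg⟩ := god_all w
    have := (god_ess w g hg).2 (fun _ u => φ u) hφ v hv
    obtain ⟨y, hy⟩ := god_all v
    exact this y hy
  intro φ w
  refine ⟨main φ w, ?_⟩
  rintro ⟨v, hv, hφ⟩ u hu
  exact main φ v hφ u (hR.trans (hR.symm hv) hu)
end
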